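/- Let 𝔩 be the F₁-Lie algebra ([E₀,E₁] = [E₀,E₂] = 0, [E₁,E₂] = αE₁ + βE₂) with the standard B-metric g. The nonzero covariant derivatives of basis vectors via the Koszul formula are ∇_{E₁}E₁ = αE₂, ∇_{E₁}E₂ = αE₁, ∇_{E₂}E₁ = -βE₂, ∇_{E₂}E₂ = -βE₁, and all ∇_{E₀}Eⱼ = ∇_{Eᵢ}E₀ = 0. -/

import Mathlib

noncomputable section

/-- Standard basis of ℝ³. -/
def E3 (i : Fin 3) : Fin 3 → ℝ := Pi.single i 1

/-- The B-metric g with g(e₀,e₀)=g(e₁,e₁)=1, g(e₂,e₂)=-1, off-diagonal zero. -/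
def gB (x y : Fin 3 → ℝ) : ℝ := x 0 * y 0 + x 1 * y 1 - x 2 * y 2

/-- The endomorphism φ: φe₀ = 0, φe₁ = e₂, φe₂ = -e₁. -/
def phi3 (x : Fin 3 → ℝ) : Fin 3 → ℝ := ![0, -x 2, x 1]

/-- The 1-form η = e₀*. -/
def eta3 (x : Fin 3 → ℝ) : ℝ := x 0
/-- The F₁-bracket: [E₀,E₁] = [E₀,E₂] = 0, [E₁,E₂] = αE₁ + βE₂. -/
def brF1 (α β : ℝ) (x y : Fin 3 → ℝ) : Fin 3 → ℝ :=
  ![0, α * (x 1 * y 2 - x 2 * y 1), β * (x 1 * y 2 - x 2 * y 1)]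

/-! The Koszul formula prescribes `g(∇_{Eᵢ}Eⱼ, Eₖ)` for every `k`, and `g` is nondegenerate
on the basis, so each `∇_{Eᵢ}Eⱼ` is read off coordinatewise from the bracket table. -/

@[simp] lemma E3_apply (i j : Fin 3) : E3 i j = if j = i then 1 else 0 := Pi.single_apply i 1 j

@[simp] lemma gB_E3_zero (v : Fin 3 → ℝ) : gB v (E3 0) = v 0 := by simp [gB]

@[simp] lemma gB_E3_one (v : Fin 3 → ℝ) : gB v (E3 1) = v 1 := by simp [gB]

@[simp] lemma gB_E3_two (v : Fin 3 → ℝ) : gB v (E3 2) = -v 2 := by simp [gB]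

lemma eq_of_forall_gB_E3_eq {v w : Fin 3 → ℝ} (h : ∀ k, gB v (E3 k) = gB w (E3 k)) :
    v = w := by
  have h0 := h 0
  have h1 := h 1
  have h2 := h 2
  simp only [gB_E3_zero, gB_E3_one, gB_E3_two, neg_inj] at h0 h1 h2
  ext k
  fin_cases k <;> assumption

section Bracket

variable (α β : ℝ)

@[simp] lemma brF1_E3_zero_left (y : Fin 3 → ℝ) : brF1 α β (E3 0) y = 0 := by
  ext k; fin_cases k <;> simp [brF1]

@[simp] lemma brF1_E3_zero_right (x : Fin 3 → ℝ) : brF1 α β x (E3 0) = 0 := by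
  ext k; fin_cases k <;> simp [brF1]

@[simp] lemma brF1_self (x : Fin 3 → ℝ) : brF1 α β x x = 0 := by
  ext k; fin_cases k <;> simp [brF1, mul_comm]

@[simp] lemma brF1_E3_one_two : brF1 α β (E3 1) (E3 2) = α • E3 1 + β • E3 2 := by
  ext k; fin_cases k <;> simp [brF1]

@[simp] lemma brF1_E3_two_one : brF1 α β (E3 2) (E3 1) = -(α • E3 1 + β • E3 2) := by
  ext k; fin_cases k <;> simp [brF1]

end Bracket

/-- the covariant derivatives of the basis vectors in the F₁-case. -/
theorem F1_nabla (α β : ℝ)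
    (nabla : (Fin 3 → ℝ) →ₗ[ℝ] (Fin 3 → ℝ) →ₗ[ℝ] (Fin 3 → ℝ))
    (hK : ∀ i j k : Fin 3, 2 * gB (nabla (E3 i) (E3 j)) (E3 k) =
      gB (brF1 α β (E3 i) (E3 j)) (E3 k) + gB (brF1 α β (E3 k) (E3 i)) (E3 j)
        + gB (brF1 α β (E3 k) (E3 j)) (E3 i)) :
    nabla (E3 1) (E3 1) = α • E3 2 ∧ nabla (E3 1) (E3 2) = α • E3 1 ∧
    nabla (E3 2) (E3 1) = -β • E3 2 ∧ nabla (E3 2) (E3 2) = -β • E3 1 ∧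
    (∀ j : Fin 3, nabla (E3 0) (E3 j) = 0) ∧
    (∀ i : Fin 3, nabla (E3 i) (E3 0) = 0) := by
  have koszul : ∀ i j (v : Fin 3 → ℝ),
      (∀ k, 2 * gB v (E3 k) = 2 * gB (nabla (E3 i) (E3 j)) (E3 k)) → nabla (E3 i) (E3 j) = v :=
    fun i j v hv => (eq_of_forall_gB_E3_eq fun k => by linarith [hv k]).symm
  refine ⟨?_, ?_, ?_, ?_, fun j => ?_, fun i => ?_⟩
  all_goals
    refine koszul _ _ _ fun k => ?_
    rw [hK]
  · fin_cases k <;> simp [two_mul]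
  · fin_cases k <;> simp [two_mul]
  · fin_cases k <;> simp [two_mul]
  · fin_cases k <;> simp [two_mul]
  · fin_cases j <;> fin_cases k <;> simp
  · fin_cases i <;> fin_cases k <;> simp
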